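/- Let Δ ∈ (0,1] and let γ = (1, Δ, Δ, Δ²)/(1+Δ)² be the two-qubit Gibbs vector. For every p ∈ Δ₄, the following are equivalent: (i) f(q) ≥ 0 for every q ∈ T₊(p); (ii) f(p^π) ≥ 0 for every permutation π of {1,2,3,4}, where p^π are the extreme points of the future thermal cone T₊(p). -/

import Mathlib

open Finset

/-- The probability simplex Δ₄ ⊂ ℝ⁴. -/
def inSimplex (p : Fin 4 → ℝ) : Prop := (∀ i, 0 ≤ p i) ∧ ∑ i, p i = 1

/-- The entanglement witness f(q) = 4 q₁ q₄ − (q₂ − q₃)². -/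
noncomputable def fwit (q : Fin 4 → ℝ) : ℝ := 4 * q 0 * q 3 - (q 1 - q 2) ^ 2

/-- The two-qubit Gibbs vector γ = (1, Δ, Δ, Δ²)/(1+Δ)². -/
noncomputable def gibbs (Δ : ℝ) : Fin 4 → ℝ :=
  ![1 / (1 + Δ) ^ 2, Δ / (1 + Δ) ^ 2, Δ / (1 + Δ) ^ 2, Δ ^ 2 / (1 + Δ) ^ 2]

/-- The thermomajorization curve L_p(x) = min_{c ≥ 0} (c x + Σᵢ max(pᵢ − c γᵢ, 0)). -/
noncomputable def Lcurve (γ p : Fin 4 → ℝ) (x : ℝ) : ℝ :=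
  ⨅ c : { c : ℝ // 0 ≤ c }, (c.1 * x + ∑ i, max (p i - c.1 * γ i) 0)

/-- The future thermal cone T₊(p): states whose thermomajorization curve lies below that of p. -/
def futureCone (γ p : Fin 4 → ℝ) : Set (Fin 4 → ℝ) :=
  { q | inSimplex q ∧ ∀ x ∈ Set.Icc (0 : ℝ) 1, Lcurve γ q x ≤ Lcurve γ p x }

/-- x_k = γ_{π(1)} + ⋯ + γ_{π(k)}  (0-based permutation, k = 0,…,4). -/
noncomputable def partialX (γ : Fin 4 → ℝ) (π : Equiv.Perm (Fin 4)) (k : ℕ) : ℝ :=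
  ∑ j : Fin 4, if (j : ℕ) < k then γ (π j) else 0

/-- The extreme point p^π of the future thermal cone: p^π_{π(k)} = L_p(x_k) − L_p(x_{k−1}). -/
noncomputable def extremePt (γ p : Fin 4 → ℝ) (π : Equiv.Perm (Fin 4)) : Fin 4 → ℝ :=
  fun i =>
    Lcurve γ p (partialX γ π ((π.symm i : ℕ) + 1)) - Lcurve γ p (partialX γ π (π.symm i))

/-!
Each `p^π` lies in `T₊(p)`: its density ratios `p^π_{π k} / γ_{π k}` are the slopes of `L_p`
between consecutive breakpoints `x_k`, so they decrease by concavity of `L_p`. Hence the positive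
terms of `Σᵢ max (p^π_i - c γᵢ) 0` form an initial segment of `π`, the sum equals
`L_p(x_k) - c x_k ≤ Σᵢ max (pᵢ - c γᵢ) 0`, and taking the infimum over `c` gives `L_{p^π} ≤ L_p`.

Conversely, for `q ∈ T₊(p)` the prefix sums along any `π` satisfy
`Σ_{j<k} q_{π j} ≤ L_q(x_k) ≤ L_p(x_k) = Σ_{j<k} p^π_{π j}`, so by Abel summation a linear
functional with weights `w` is at least as large at `p^π` as at `q` once `π` lists the levels by
decreasing weight. By Hahn–Banach, `T₊(p)` lies in the convex hull of the `p^π`.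

Finally `{q | q₁ ≥ 0, q₄ ≥ 0, f(q) ≥ 0}` is convex (it is a cone of positive semidefinite
`2 × 2` matrices `[[2q₁, q₂ - q₃], [q₂ - q₃, 2q₄]]`), so `f ≥ 0` at the vertices propagates to
the hull.
-/

section PrefixSum

variable {n : ℕ} {M : Type*}

def prefixSum [AddCommMonoid M] (g : Fin n → M) (k : ℕ) : M :=
  ∑ j : Fin n, if (j : ℕ) < k then g j else 0

section AddCommMonoid

variable [AddCommMonoid M] (g : Fin n → M)

@[simp]
lemma prefixSum_zero : prefixSum g 0 = 0 := by
  simp [prefixSum]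

lemma prefixSum_succ (k : Fin n) : prefixSum g (k + 1) = prefixSum g k + g k := by
  have hsplit : ∀ j : Fin n, (if (j : ℕ) < k + 1 then g j else 0) =
      (if (j : ℕ) < k then g j else 0) + if j = k then g j else 0 := by
    intro j
    rcases lt_trichotomy (j : ℕ) k with h | h | h
    · simp [h, h.trans (Nat.lt_succ_self _), Fin.ne_of_lt h]
    · simp [Fin.ext h]
    · simp [show ¬ (j : ℕ) < k + 1 by omega, h.not_gt, (Fin.ne_of_lt h).symm]
  simp only [prefixSum, hsplit, sum_add_distrib, sum_ite_eq', mem_univ, if_true]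

lemma prefixSum_of_le {k : ℕ} (hk : n ≤ k) : prefixSum g k = ∑ j, g j :=
  sum_congr rfl fun j _ => if_pos (j.2.trans_le hk)

lemma prefixSum_succ_of_le {k : ℕ} (hk : n ≤ k) : prefixSum g (k + 1) = prefixSum g k := by
  rw [prefixSum_of_le g hk, prefixSum_of_le g (hk.trans k.le_succ)]

end AddCommMonoid

section Ordered

variable [AddCommMonoid M] [PartialOrder M] [IsOrderedAddMonoid M] {g : Fin n → M}

lemma prefixSum_mono (hg : 0 ≤ g) : Monotone (prefixSum g) := fun k l hkl =>
  sum_le_sum fun j _ => by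
    split_ifs with hk hl
    · exact le_rfl
    · omega
    · exact hg j
    · exact le_rfl

lemma prefixSum_le_sum (hg : 0 ≤ g) (k : ℕ) : prefixSum g k ≤ ∑ j, g j :=
  (prefixSum_mono hg (le_max_left k n)).trans_eq (prefixSum_of_le g (le_max_right k n))

end Ordered

lemma sum_mul_le_sum_mul_of_prefixSum_le {R : Type*} [CommRing R] [PartialOrder R]
    [IsOrderedRing R] {w a b : Fin n → R} (hw : Antitone w)
    (hab : ∀ k, prefixSum a k ≤ prefixSum b k) (htot : ∑ j, a j = ∑ j, b j) :
    ∑ j, w j * a j ≤ ∑ j, w j * b j := by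
  cases n with
  | zero => simp
  | succ n =>
    set D : ℕ → R := fun k => prefixSum b k - prefixSum a k with hD
    have hD0 : D 0 = 0 := by simp [hD]
    have hDn : D (n + 1) = 0 := by
      simp only [hD, prefixSum_of_le _ le_rfl, htot, sub_self]
    have hstep : ∀ j : Fin (n + 1), b j - a j = D (j + 1) - D j := by
      intro j
      simp only [hD, prefixSum_succ]
      ring
    have hsum : ∑ j, w j * b j - ∑ j, w j * a j =
        ∑ i : Fin n, (w i.castSucc - w i.succ) * D (i + 1) :=
      calc _ = ∑ j : Fin (n + 1), w j * D (j + 1) - ∑ j : Fin (n + 1), w j * D j := by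
            rw [← sum_sub_distrib, ← sum_sub_distrib]
            exact sum_congr rfl fun j _ => by rw [← mul_sub, ← mul_sub, hstep]
        _ = _ := by
            rw [Fin.sum_univ_castSucc, Fin.sum_univ_succ]
            simp [hD0, hDn, sub_mul]
    have hnonneg : 0 ≤ ∑ i : Fin n, (w i.castSucc - w i.succ) * D (i + 1) :=
      sum_nonneg fun i _ => mul_nonneg (sub_nonneg.2 (hw (Fin.castSucc_le_succ i)))
        (sub_nonneg.2 (hab _))
    exact sub_nonneg.1 (hsum ▸ hnonneg)

end PrefixSum

section Lcurve

variable {γ q p : Fin 4 → ℝ}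

lemma bddBelow_Lcurve_range {x : ℝ} (hx : 0 ≤ x) :
    BddBelow (Set.range fun c : { c : ℝ // 0 ≤ c } => c.1 * x + ∑ i, max (q i - c.1 * γ i) 0) :=
  ⟨0, by
    rintro _ ⟨c, rfl⟩
    exact add_nonneg (mul_nonneg c.2 hx) (sum_nonneg fun i _ => le_max_right _ _)⟩

lemma Lcurve_le {x c : ℝ} (hx : 0 ≤ x) (hc : 0 ≤ c) :
    Lcurve γ q x ≤ c * x + ∑ i, max (q i - c * γ i) 0 :=
  ciInf_le (bddBelow_Lcurve_range hx) ⟨c, hc⟩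

lemma le_Lcurve {x b : ℝ} (h : ∀ c, 0 ≤ c → b ≤ c * x + ∑ i, max (q i - c * γ i) 0) :
    b ≤ Lcurve γ q x :=
  have : Nonempty { c : ℝ // 0 ≤ c } := ⟨⟨0, le_rfl⟩⟩
  le_ciInf fun c => h c.1 c.2

lemma Lcurve_le_Lcurve_of_sum_max_le
    (h : ∀ c, 0 ≤ c → ∑ i, max (q i - c * γ i) 0 ≤ ∑ i, max (p i - c * γ i) 0)
    {x : ℝ} (hx : 0 ≤ x) : Lcurve γ q x ≤ Lcurve γ p x :=
  le_Lcurve fun c hc => (Lcurve_le hx hc).trans (add_le_add_iff_left _ |>.2 (h c hc))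

lemma concaveOn_Lcurve : ConcaveOn ℝ (Set.Ici 0) (Lcurve γ q) := by
  refine ⟨convex_Ici 0, fun x hx y hy a b ha hb hab => le_Lcurve fun c hc => ?_⟩
  have hx' := mul_le_mul_of_nonneg_left (Lcurve_le (γ := γ) (q := q) hx hc) ha
  have hy' := mul_le_mul_of_nonneg_left (Lcurve_le (γ := γ) (q := q) hy hc) hb
  simp only [smul_eq_mul]
  linear_combination hx' + hy' + (∑ i, max (q i - c * γ i) 0) * hab

lemma monotoneOn_Lcurve : MonotoneOn (Lcurve γ q) (Set.Ici 0) := fun x hx y _ hxy =>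
  le_Lcurve fun c hc =>
    (Lcurve_le hx hc).trans (by gcongr)

lemma Lcurve_zero (hq : ∀ i, 0 ≤ q i) (hγ : ∀ i, 0 < γ i) : Lcurve γ q 0 = 0 := by
  refine le_antisymm ?_ (le_Lcurve fun c _ => by simpa using sum_nonneg fun i _ => le_max_right _ _)
  -- `c` exceeds every ratio `q i / γ i`, so every term `max (q i - c * γ i) 0` vanishes.
  set c := ∑ j, q j / γ j
  have hc : 0 ≤ c := sum_nonneg fun j _ => div_nonneg (hq j) (hγ j).le
  have hvanish : ∑ i, max (q i - c * γ i) 0 = 0 := sum_eq_zero fun i _ => by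
    have h := single_le_sum (fun j _ => div_nonneg (hq j) (hγ j).le) (mem_univ i)
    rw [div_le_iff₀ (hγ i)] at h
    exact max_eq_right (by linarith)
  simpa [hvanish] using Lcurve_le (γ := γ) (q := q) le_rfl hc

lemma Lcurve_one (hq : inSimplex q) (hγ : ∑ i, γ i = 1) : Lcurve γ q 1 = 1 := by
  refine le_antisymm ?_ (le_Lcurve fun c _ => ?_)
  · simpa [max_eq_left (hq.1 _), hq.2] using Lcurve_le (γ := γ) (q := q) zero_le_one le_rfl
  · have h : ∑ i, (q i - c * γ i) ≤ ∑ i, max (q i - c * γ i) 0 :=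
      sum_le_sum fun i _ => le_max_left _ _
    rw [sum_sub_distrib, ← mul_sum, hq.2, hγ] at h
    linarith

lemma prefixSum_le_Lcurve_partialX (π : Equiv.Perm (Fin 4)) (k : ℕ) :
    prefixSum (fun j => q (π j)) k ≤ Lcurve γ q (partialX γ π k) := by
  refine le_Lcurve fun c hc => ?_
  have hterm : ∀ j : Fin 4, (if (j : ℕ) < k then q (π j) else 0) ≤
      c * (if (j : ℕ) < k then γ (π j) else 0) + max (q (π j) - c * γ (π j)) 0 := by
    intro j
    split_ifs
    · linarith [le_max_left (q (π j) - c * γ (π j)) 0]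
    · simp
  calc prefixSum (fun j => q (π j)) k
      ≤ ∑ j : Fin 4, (c * (if (j : ℕ) < k then γ (π j) else 0) +
          max (q (π j) - c * γ (π j)) 0) := sum_le_sum fun j _ => hterm j
    _ = c * partialX γ π k + ∑ i, max (q i - c * γ i) 0 := by
      rw [sum_add_distrib, ← mul_sum, Equiv.sum_comp π fun i => max (q i - c * γ i) 0]
      rfl

end Lcurve

lemma ConcaveOn.slope_le_slope_of_le {𝕜 : Type*} [Field 𝕜] [LinearOrder 𝕜]
    [IsStrictOrderedRing 𝕜] {s : Set 𝕜} {f : 𝕜 → 𝕜} (hf : ConcaveOn 𝕜 s f)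
    {x₁ x₂ x₃ x₄ : 𝕜} (h₁ : x₁ ∈ s) (h₄ : x₄ ∈ s) (h₁₂ : x₁ < x₂) (h₂₃ : x₂ ≤ x₃)
    (h₃₄ : x₃ < x₄) : (f x₄ - f x₃) / (x₄ - x₃) ≤ (f x₂ - f x₁) / (x₂ - x₁) := by
  rcases h₂₃.eq_or_lt with rfl | h₂₃
  · exact hf.slope_anti_adjacent h₁ h₄ h₁₂ h₃₄
  have h₂ : x₂ ∈ s := hf.1.ordConnected.out h₁ h₄ ⟨h₁₂.le, (h₂₃.trans h₃₄).le⟩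
  have h₃ : x₃ ∈ s := hf.1.ordConnected.out h₁ h₄ ⟨(h₁₂.trans h₂₃).le, h₃₄.le⟩
  exact (hf.slope_anti_adjacent h₂ h₄ h₂₃ h₃₄).trans (hf.slope_anti_adjacent h₁ h₃ h₁₂ h₂₃)

lemma Antitone.exists_forall_lt_iff_lt {n : ℕ} {α : Type*} [LinearOrder α] {s : Fin n → α}
    (hs : Antitone s) (c : α) : ∃ k : ℕ, ∀ j : Fin n, (j : ℕ) < k ↔ c < s j := by
  classical
  have hex : ∃ k : ℕ, ∀ j : Fin n, k ≤ j → s j ≤ c := ⟨n, fun j hj => absurd j.2 (by omega)⟩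
  refine ⟨Nat.find hex, fun j => ⟨fun hj => ?_, fun hc => ?_⟩⟩
  · by_contra! hsj
    exact (Nat.find_min hex hj) fun j' hj' => (hs (Fin.le_def.2 hj')).trans hsj
  · by_contra! hj
    exact (Nat.find_spec hex j hj).not_gt hc

section ExtremePoint

variable {γ p : Fin 4 → ℝ} (π : Equiv.Perm (Fin 4))

lemma partialX_eq_prefixSum (k : ℕ) : partialX γ π k = prefixSum (fun j => γ (π j)) k := rfl

lemma partialX_zero : partialX γ π 0 = 0 := prefixSum_zero _

lemma partialX_succ (k : Fin 4) : partialX γ π (k + 1) = partialX γ π k + γ (π k) :=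
  prefixSum_succ _ k

lemma partialX_mono (hγ : ∀ i, 0 ≤ γ i) : Monotone (partialX γ π) :=
  prefixSum_mono fun j => hγ (π j)

lemma partialX_nonneg (hγ : ∀ i, 0 ≤ γ i) (k : ℕ) : 0 ≤ partialX γ π k :=
  partialX_zero π ▸ partialX_mono π hγ k.zero_le

lemma partialX_mem_Icc (hγ : ∀ i, 0 ≤ γ i) (hγ1 : ∑ i, γ i = 1) (k : ℕ) :
    partialX γ π k ∈ Set.Icc 0 1 :=
  ⟨partialX_nonneg π hγ k,
    (prefixSum_le_sum (fun j => hγ (π j)) k).trans_eq (by rw [Equiv.sum_comp π γ, hγ1])⟩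

lemma extremePt_apply_perm (j : Fin 4) :
    extremePt γ p π (π j) = Lcurve γ p (partialX γ π (j + 1)) - Lcurve γ p (partialX γ π j) := by
  simp [extremePt]

lemma prefixSum_extremePt (hp : ∀ i, 0 ≤ p i) (hγ : ∀ i, 0 < γ i) (k : ℕ) :
    prefixSum (fun j => extremePt γ p π (π j)) k = Lcurve γ p (partialX γ π k) := by
  induction k with
  | zero => rw [prefixSum_zero, partialX_zero, Lcurve_zero hp hγ]
  | succ k ih =>
    rcases lt_or_ge k 4 with hk | hk
    · have hsucc := prefixSum_succ (fun j => extremePt γ p π (π j)) ⟨k, hk⟩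
      have hX := extremePt_apply_perm (γ := γ) (p := p) π ⟨k, hk⟩
      simp only at hsucc hX
      rw [hsucc, ih, hX]
      ring
    · rw [prefixSum_succ_of_le _ hk, ih, partialX_eq_prefixSum _ (k + 1),
        prefixSum_succ_of_le _ hk, partialX_eq_prefixSum]

lemma extremePt_mem_inSimplex (hp : inSimplex p) (hγ : ∀ i, 0 < γ i) (hγ1 : ∑ i, γ i = 1) :
    inSimplex (extremePt γ p π) := by
  have hγ0 : ∀ i, 0 ≤ γ i := fun i => (hγ i).le
  refine ⟨fun i => sub_nonneg.2 ?_, ?_⟩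
  · exact monotoneOn_Lcurve (partialX_nonneg π hγ0 _) (partialX_nonneg π hγ0 _)
      (partialX_mono π hγ0 (Nat.le_succ _))
  · rw [← Equiv.sum_comp π, ← prefixSum_of_le _ le_rfl, prefixSum_extremePt π hp.1 hγ,
      partialX_eq_prefixSum, prefixSum_of_le _ le_rfl, Equiv.sum_comp π γ, hγ1, Lcurve_one hp hγ1]

lemma antitone_extremePt_div (hγ : ∀ i, 0 < γ i) :
    Antitone fun j => extremePt γ p π (π j) / γ (π j) := by
  intro j k hjk
  rcases hjk.eq_or_lt with rfl | hjk
  · exact le_rfl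
  have hγ0 : ∀ i, 0 ≤ γ i := fun i => (hγ i).le
  have hslope : ∀ j : Fin 4, extremePt γ p π (π j) / γ (π j) =
      (Lcurve γ p (partialX γ π (j + 1)) - Lcurve γ p (partialX γ π j)) /
        (partialX γ π (j + 1) - partialX γ π j) := fun j => by
    rw [extremePt_apply_perm, partialX_succ, add_sub_cancel_left]
  simp only [hslope]
  exact concaveOn_Lcurve.slope_le_slope_of_le (partialX_nonneg π hγ0 _)
    (partialX_nonneg π hγ0 _) (by rw [partialX_succ]; linarith [hγ (π j)])
    (partialX_mono π hγ0 (Fin.lt_def.1 hjk)) (by rw [partialX_succ]; linarith [hγ (π k)])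

end ExtremePoint

section FutureCone

variable {γ p : Fin 4 → ℝ}

lemma sum_max_extremePt_sub_le (π : Equiv.Perm (Fin 4)) (hp : ∀ i, 0 ≤ p i)
    (hγ : ∀ i, 0 < γ i) {c : ℝ} (hc : 0 ≤ c) :
    ∑ i, max (extremePt γ p π i - c * γ i) 0 ≤ ∑ i, max (p i - c * γ i) 0 := by
  -- The positive terms form an initial segment of `π`, so the sum is a prefix sum.
  obtain ⟨k, hk⟩ := (antitone_extremePt_div (p := p) π hγ).exists_forall_lt_iff_lt c
  have hterm : ∀ j : Fin 4, max (extremePt γ p π (π j) - c * γ (π j)) 0 =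
      (if (j : ℕ) < k then extremePt γ p π (π j) else 0) -
        c * (if (j : ℕ) < k then γ (π j) else 0) := fun j => by
    have hkj := hk j
    rw [lt_div_iff₀ (hγ (π j))] at hkj
    split_ifs with hj
    · exact max_eq_left (by linarith [hkj.1 hj])
    · exact (max_eq_right (by linarith [not_lt.1 (hkj.not.1 hj)])).trans (by ring)
  calc ∑ i, max (extremePt γ p π i - c * γ i) 0
      = Lcurve γ p (partialX γ π k) - c * partialX γ π k := by
        rw [← Equiv.sum_comp π, sum_congr rfl fun j _ => hterm j, sum_sub_distrib, ← mul_sum]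
        exact congrArg₂ _ (prefixSum_extremePt π hp hγ k) rfl
    _ ≤ ∑ i, max (p i - c * γ i) 0 := by
        linarith [Lcurve_le (γ := γ) (q := p) (partialX_nonneg π (fun i => (hγ i).le) k) hc]

lemma extremePt_mem_futureCone (hp : inSimplex p) (hγ : ∀ i, 0 < γ i) (hγ1 : ∑ i, γ i = 1)
    (π : Equiv.Perm (Fin 4)) : extremePt γ p π ∈ futureCone γ p :=
  ⟨extremePt_mem_inSimplex π hp hγ hγ1, fun _ hx =>
    Lcurve_le_Lcurve_of_sum_max_le (fun _ hc => sum_max_extremePt_sub_le π hp.1 hγ hc) hx.1⟩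

lemma exists_sum_mul_le_extremePt (hp : inSimplex p) (hγ : ∀ i, 0 < γ i)
    (hγ1 : ∑ i, γ i = 1) {q : Fin 4 → ℝ} (hq : q ∈ futureCone γ p) (w : Fin 4 → ℝ) :
    ∃ π, ∑ i, w i * q i ≤ ∑ i, w i * extremePt γ p π i := by
  set π := Tuple.sort (OrderDual.toDual ∘ w)
  have hw : Antitone fun j => w (π j) := monotone_toDual_comp_iff.1 (Tuple.monotone_sort _)
  have hv := extremePt_mem_inSimplex π hp hγ hγ1
  refine ⟨π, ?_⟩
  rw [← Equiv.sum_comp π, ← Equiv.sum_comp π fun i => w i * extremePt γ p π i]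
  refine sum_mul_le_sum_mul_of_prefixSum_le hw (fun k => ?_) ?_
  · rw [prefixSum_extremePt π hp.1 hγ]
    exact (prefixSum_le_Lcurve_partialX π k).trans
      (hq.2 _ (partialX_mem_Icc π (fun i => (hγ i).le) hγ1 k))
  · rw [Equiv.sum_comp π q, Equiv.sum_comp π (extremePt γ p π), hq.1.2, hv.2]

lemma futureCone_subset_convexHull (hp : inSimplex p) (hγ : ∀ i, 0 < γ i)
    (hγ1 : ∑ i, γ i = 1) : futureCone γ p ⊆ convexHull ℝ (Set.range (extremePt γ p)) := by
  intro q hq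
  by_contra hq'
  obtain ⟨f, u, hfu, huq⟩ := geometric_hahn_banach_closed_point (convex_convexHull ℝ _)
    ((Set.finite_range _).isCompact_convexHull (𝕜 := ℝ)).isClosed hq'
  set w : Fin 4 → ℝ := fun i => f fun j => if i = j then 1 else 0
  have hf : ∀ r, f r = ∑ i, w i * r i := fun r => by
    simpa [mul_comm] using f.toLinearMap.pi_apply_eq_sum_univ r
  obtain ⟨π, hπ⟩ := exists_sum_mul_le_extremePt hp hγ hγ1 hq w
  have hv := hfu _ (subset_convexHull ℝ _ ⟨π, rfl⟩)
  rw [hf] at hv huq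
  linarith

end FutureCone

lemma mul_le_of_sq_le_mul {a b d a' b' d' : ℝ} (ha : 0 ≤ a) (hd : 0 ≤ d) (ha' : 0 ≤ a')
    (hd' : 0 ≤ d') (h : b ^ 2 ≤ 4 * a * d) (h' : b' ^ 2 ≤ 4 * a' * d') :
    b * b' ≤ 2 * (a * d' + a' * d) := by
  have hsq : (b * b') ^ 2 ≤ (2 * (a * d' + a' * d)) ^ 2 := by
    nlinarith [mul_le_mul h h' (sq_nonneg _) (by positivity), sq_nonneg (a * d' - a' * d)]
  exact (abs_le_of_sq_le_sq' hsq (by positivity)).2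

lemma convex_setOf_fwit_nonneg : Convex ℝ {r : Fin 4 → ℝ | 0 ≤ r 0 ∧ 0 ≤ r 3 ∧ 0 ≤ fwit r} := by
  rintro r ⟨hr0, hr3, hr⟩ s ⟨hs0, hs3, hs⟩ t u ht hu -
  simp only [fwit, sub_nonneg] at hr hs
  have hcross := mul_le_of_sq_le_mul hr0 hr3 hs0 hs3 hr hs
  simp only [Set.mem_ofPred_eq, fwit, Pi.add_apply, Pi.smul_apply, smul_eq_mul]
  refine ⟨by positivity, by positivity, ?_⟩
  nlinarith [mul_le_mul_of_nonneg_left hcross (mul_nonneg ht hu),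
    mul_le_mul_of_nonneg_left hr (sq_nonneg t), mul_le_mul_of_nonneg_left hs (sq_nonneg u)]

lemma gibbs_pos {Δ : ℝ} (hΔ : 0 < Δ) (i : Fin 4) : 0 < gibbs Δ i := by
  fin_cases i <;> simp [gibbs] <;> positivity

lemma sum_gibbs {Δ : ℝ} (hΔ : 1 + Δ ≠ 0) : ∑ i, gibbs Δ i = 1 := by
  simp only [gibbs, Fin.sum_univ_four, Matrix.cons_val_zero, Matrix.cons_val_one, Matrix.cons_val]
  rw [← add_div, ← add_div, ← add_div, div_eq_one_iff_eq (pow_ne_zero 2 hΔ)]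
  ring

theorem nonentanglable_iff_extreme_points_general
    (Δ : ℝ) (hΔ0 : 0 < Δ)
    (p : Fin 4 → ℝ) (hp : inSimplex p) :
    (∀ q ∈ futureCone (gibbs Δ) p, 0 ≤ fwit q) ↔
      (∀ π : Equiv.Perm (Fin 4), 0 ≤ fwit (extremePt (gibbs Δ) p π)) := by
  have hγ := gibbs_pos hΔ0
  have hγ1 := sum_gibbs (by positivity : 1 + Δ ≠ 0)
  refine ⟨fun h π => h _ (extremePt_mem_futureCone hp hγ hγ1 π), fun h q hq => ?_⟩
  have hvertices : Set.range (extremePt (gibbs Δ) p) ⊆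
      {r | 0 ≤ r 0 ∧ 0 ≤ r 3 ∧ 0 ≤ fwit r} := by
    rintro _ ⟨π, rfl⟩
    have hv := extremePt_mem_inSimplex π hp hγ hγ1
    exact ⟨hv.1 0, hv.1 3, h π⟩
  exact (convexHull_min hvertices convex_setOf_fwit_nonneg
    (futureCone_subset_convexHull hp hγ hγ1 hq)).2.2

/-- f ≥ 0 on the whole future thermal cone T₊(p) iff f ≥ 0 on all of its
extreme points p^π, π ranging over the 24 permutations of the four levels. -/
theorem nonentanglable_iff_extreme_points
    (Δ : ℝ) (hΔ0 : 0 < Δ) (hΔ1 : Δ ≤ 1)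
    (p : Fin 4 → ℝ) (hp : inSimplex p) :
    (∀ q ∈ futureCone (gibbs Δ) p, 0 ≤ fwit q) ↔
      (∀ π : Equiv.Perm (Fin 4), 0 ≤ fwit (extremePt (gibbs Δ) p π)) :=
  nonentanglable_iff_extreme_points_general Δ hΔ0 p hp
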